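/- Let k be a field of characteristic zero, q ∈ k a primitive e-th root of unity, σ the automorphism of k[h] with σ(h) = qh, and f, g ∈ k[h] with f(0) ≠ 0. If the product f·g is fixed by σ, then N(f)/f divides g, where N(f) = lcm(f, σ(f), ..., σ^{e−1}(f)). -/

import Mathlib

open Polynomial

theorem EuclideanDomain.div_dvd_of_dvd_mul {R : Type*} [EuclideanDomain R] {a b c : R}
    (ha : a ≠ 0) (hab : a ∣ b) (h : b ∣ a * c) : b / a ∣ c := by
  obtain ⟨d, rfl⟩ := hab
  rw [mul_div_cancel_left₀ d ha]
  exact (mul_dvd_mul_iff_left ha).mp h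

namespace Polynomial

variable {R : Type*} [CommSemiring R]

theorem comp_C_mul_X_comp_C_mul_X (p : R[X]) (a b : R) :
    (p.comp (C a * X)).comp (C b * X) = p.comp (C (a * b) * X) := by
  rw [comp_assoc, mul_comp, C_comp, X_comp, ← mul_assoc, ← C_mul]

theorem comp_C_pow_mul_X_eq_self {p : R[X]} {a : R} (h : p.comp (C a * X) = p) (i : ℕ) :
    p.comp (C (a ^ i) * X) = p := by
  induction i with
  | zero => simp
  | succ n ih => rw [pow_succ, ← comp_C_mul_X_comp_C_mul_X, ih, h]

end Polynomial

theorem Nf_div_dvd (k : Type*) [Field k] (q : k) (e : ℕ)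
    (he : 0 < e) (f g : k[X]) (hf : f.eval 0 ≠ 0)
    (Nf : k[X])
    (hNdvd : ∀ i < e, f.comp (C (q ^ i) * X) ∣ Nf)
    (hNmin : ∀ m : k[X], (∀ i < e, f.comp (C (q ^ i) * X) ∣ m) → Nf ∣ m)
    (hfg : (f * g).comp (C q * X) = f * g) :
    Nf / f ∣ g := by
  have hf0 : f ≠ 0 := fun h => hf (by simp [h])
  have hfN : f ∣ Nf := by simpa using hNdvd 0 he
  have hNfg : Nf ∣ f * g := hNmin _ fun i _ => by
    rw [← comp_C_pow_mul_X_eq_self hfg i, mul_comp]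
    exact dvd_mul_right _ _
  exact EuclideanDomain.div_dvd_of_dvd_mul hf0 hfN hNfg
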